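/- arXiv:1307.1987 — 2 statements merged into one kernel-verified Lean document; each statement's English description precedes it below -/
import Mathlib

section
/- Let D be an abelian category with a distinguished Giraud subcategory (D, C, l, i), and suppose D is endowed with a torsion pair (X, Y). Then the class i^←(Y) := { C ∈ C | i(C) ∈ Y } is a torsion-free class on C. -/
open CategoryTheory Limits CategoryTheory.Pretriangulated

universe w'' w' w v'' u'' v' u' v u

namespace TiltedGiraudPaper

section Basics

variable (C : Type u) [Category.{v} C]

/-- A class of objects is closed under extensions: for every short exact sequence,
if the two outer terms belong to the class, then so does the middle term. -/
def ClosedUnderExtensions [HasZeroMorphisms C] (P : Set C) : Prop :=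
  ∀ S : ShortComplex C, S.ShortExact → S.X₁ ∈ P → S.X₃ ∈ P → S.X₂ ∈ P

/-- A class of objects is closed under (existing small) inductive limits. -/
def ClosedUnderColimits (P : Set C) : Prop :=
  ∀ {J : Type v} [SmallCategory J] {F : J ⥤ C} (c : Cocone F),
    IsColimit c → (∀ j, F.obj j ∈ P) → c.pt ∈ P

/-- A class of objects is closed under (existing small) projective limits. -/
def ClosedUnderLimits (P : Set C) : Prop :=
  ∀ {J : Type v} [SmallCategory J] {F : J ⥤ C} (c : Cone F),
    IsLimit c → (∀ j, F.obj j ∈ P) → c.pt ∈ P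

/-- A torsion class: a class of objects closed under inductive limits and extensions. -/
def IsTorsionClass [HasZeroMorphisms C] (P : Set C) : Prop :=
  ClosedUnderColimits C P ∧ ClosedUnderExtensions C P

/-- A torsion-free class: a class of objects closed under projective limits and extensions. -/
def IsTorsionFreeClass [HasZeroMorphisms C] (P : Set C) : Prop :=
  ClosedUnderLimits C P ∧ ClosedUnderExtensions C P

/-- A Serre class: for every short exact sequence, the middle term belongs to the class
if and only if both outer terms do. -/
def IsSerreClass [HasZeroMorphisms C] (P : Set C) : Prop :=
  ∀ S : ShortComplex C, S.ShortExact → (S.X₂ ∈ P ↔ (S.X₁ ∈ P ∧ S.X₃ ∈ P))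

/-- A torsion pair `(torsion, torsionFree)` on an abelian category: a torsion class and a
torsion-free class with no nonzero morphisms from the first to the second, such that every
object is an extension of a torsion-free object by a torsion object. -/
structure TorsionPair [HasZeroMorphisms C] where
  torsion : Set C
  torsionFree : Set C
  isTorsionClass : IsTorsionClass C torsion
  isTorsionFreeClass : IsTorsionFreeClass C torsionFree
  hom_eq_zero : ∀ ⦃T F : C⦄, T ∈ torsion → F ∈ torsionFree → ∀ f : T ⟶ F, f = 0
  exists_ses : ∀ A : C, ∃ (T F : C) (f : T ⟶ A) (g : A ⟶ F) (w : f ≫ g = 0),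
    T ∈ torsion ∧ F ∈ torsionFree ∧ (ShortComplex.mk f g w).ShortExact

end Basics

section Functors

variable {C : Type u} [Category.{v} C] {D : Type u'} [Category.{v'} D]

/-- The essential image of a class of objects under a functor. -/
def imageSet (L : C ⥤ D) (P : Set C) : Set D :=
  {Y | ∃ X, X ∈ P ∧ Nonempty (L.obj X ≅ Y)}

/-- The preimage of a class of objects under a functor. -/
def preimageSet (L : C ⥤ D) (P : Set D) : Set C :=
  {X | L.obj X ∈ P}

/-- The kernel of a functor: the class of objects sent to a zero object. -/
def kerSet (L : C ⥤ D) : Set C :=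
  {X | IsZero (L.obj X)}

end Functors

section Perp

variable {C : Type u} [Category.{v} C]

/-- `S^⊥`: the class of objects receiving no nonzero morphism from objects of `S`. -/
def rightPerp [HasZeroMorphisms C] (S : Set C) : Set C :=
  {Y | ∀ X ∈ S, ∀ f : X ⟶ Y, f = 0}

/-- `^⊥S`: the class of objects admitting no nonzero morphism to objects of `S`. -/
def leftPerp [HasZeroMorphisms C] (S : Set C) : Set C :=
  {X | ∀ Y ∈ S, ∀ f : X ⟶ Y, f = 0}

/-- The class of morphisms whose kernel and cokernel belong to the class `S`. -/
def serreW [HasZeroMorphisms C] (S : Set C) : MorphismProperty C := fun X Y f =>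
  (∃ (K : C) (k : K ⟶ X) (w : k ≫ f = 0), K ∈ S ∧ Nonempty (IsLimit (KernelFork.ofι k w))) ∧
  (∃ (Q : C) (q : Y ⟶ Q) (w : f ≫ q = 0), Q ∈ S ∧ Nonempty (IsColimit (CokernelCofork.ofπ q w)))

end Perp

/-- `L : C ⥤ D` exhibits `D` as the (Gabriel) quotient of `C` by the Serre class `S`:
`L` is exact, essentially surjective, its kernel is exactly `S`, and `L` is a localization
of `C` at the class of morphisms with kernel and cokernel in `S`. -/
def IsSerreQuotient {C : Type u} [Category.{v} C] [HasZeroMorphisms C]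
    {D : Type u'} [Category.{v'} D] (S : Set C) (L : C ⥤ D) : Prop :=
  Nonempty (PreservesFiniteLimits L) ∧ Nonempty (PreservesFiniteColimits L) ∧
  L.EssSurj ∧ (∀ X : C, IsZero (L.obj X) ↔ X ∈ S) ∧
  L.IsLocalization (serreW S)


/-! A torsion-free class is closed under subobjects, since it is the right orthogonal of the
torsion class.  The right adjoint `i` preserves limits, and it is left exact: a short exact
sequence `0 → A → B → E → 0` in `C` goes to an exact `0 → iA → iB → iE`, which exhibits `iB` as an
extension of the image of `iB → iE`, a subobject of `iE`, by `iA`. -/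

section ClosureProperties

variable {C : Type u} [Category.{v} C]

lemma ClosedUnderLimits.mem_of_iso {P : Set C} (hP : ClosedUnderLimits C P) {A B : C}
    (e : A ≅ B) (hB : B ∈ P) : A ∈ P :=
  hP (⟨A, ⟨fun _ => e.hom, by simp⟩⟩ : Cone ((Functor.const (Discrete PUnit.{v + 1})).obj B))
    ((isLimitConstCone _ B).ofIsoLimit (Cone.ext e.symm fun _ => e.inv_hom_id.symm)) (fun _ => hB)

lemma ClosedUnderLimits.preimageSet {D : Type u'} [Category.{v} D] {P : Set D}
    (hP : ClosedUnderLimits D P) (G : C ⥤ D) [PreservesLimitsOfSize.{v, v} G] :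
    ClosedUnderLimits C (preimageSet G P) :=
  fun c hc hF => hP (G.mapCone c) (isLimitOfPreserves G hc) hF

variable [Abelian C]

lemma ClosedUnderExtensions.mem_of_exact_of_mono {P : Set C} (hP : ClosedUnderExtensions C P)
    (hsub : ∀ ⦃K A : C⦄ (m : K ⟶ A), Mono m → A ∈ P → K ∈ P)
    {S : ShortComplex C} (hS : S.Exact) [Mono S.f] (h₁ : S.X₁ ∈ P) (h₃ : S.X₃ ∈ P) :
    S.X₂ ∈ P := by
  let T := ShortComplex.mk S.f (Abelian.coimage.π S.g) (Abelian.comp_coimage_π_eq_zero S.zero)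
  have hT : T.ShortExact := { exact := S.exact_iff_exact_coimage_π.1 hS }
  exact hP T hT h₁ (hsub (Abelian.factorThruCoimage S.g) inferInstance h₃)

lemma ClosedUnderExtensions.preimageSet {D : Type u'} [Category.{v'} D] [Abelian D]
    {P : Set D} (hP : ClosedUnderExtensions D P)
    (hsub : ∀ ⦃K A : D⦄ (m : K ⟶ A), Mono m → A ∈ P → K ∈ P)
    (G : C ⥤ D) [PreservesFiniteLimits G] :
    ClosedUnderExtensions C (preimageSet G P) := by
  intro S hS h₁ h₃
  have := hS.mono_f
  obtain ⟨hexact, _⟩ := (S.map G).exact_and_mono_f_iff_f_is_kernel.2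
    ⟨KernelFork.mapIsLimit _ hS.fIsKernel G⟩
  exact hP.mem_of_exact_of_mono hsub hexact h₁ h₃

end ClosureProperties

namespace TorsionPair

variable {D : Type u} [Category.{v} D] [Abelian D] (p : TorsionPair D)

lemma rightPerp_torsion_subset_torsionFree : rightPerp p.torsion ⊆ p.torsionFree := by
  intro A hA
  obtain ⟨T, F, f, g, w, hT, hF, hse⟩ := p.exists_ses A
  have := hse.epi_g
  have := hse.exact.mono_g (hA T hT f)
  have := isIso_of_mono_of_epi g
  exact ClosedUnderLimits.mem_of_iso p.isTorsionFreeClass.1 (asIso g) hF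

lemma mem_torsionFree_of_mono {K A : D} (m : K ⟶ A) [Mono m] (hA : A ∈ p.torsionFree) :
    K ∈ p.torsionFree :=
  p.rightPerp_torsion_subset_torsionFree fun T hT f => by
    rw [← cancel_mono m, zero_comp]
    exact p.hom_eq_zero hT hA (f ≫ m)

end TorsionPair

theorem preimage_torsionFree_of_giraud_general
    {D : Type u} [Category.{v} D] [Abelian D]
    {C : Type u} [Category.{v} C] [Abelian C]
    (l : D ⥤ C) (i : C ⥤ D) (adj : l ⊣ i)
    (p : TorsionPair D) :
    IsTorsionFreeClass C (preimageSet i p.torsionFree) := by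
  have := adj.rightAdjoint_preservesLimits
  exact ⟨ClosedUnderLimits.preimageSet p.isTorsionFreeClass.1 i,
    ClosedUnderExtensions.preimageSet p.isTorsionFreeClass.2
      (fun _ _ m _ => p.mem_torsionFree_of_mono m) i⟩

/-- **Corollary.** Let `(D, C, l, i)` be a distinguished Giraud subcategory and `(X, Y)` a
torsion pair on `D`.  Then `i^←(Y) = {A | i(A) ∈ Y}` is a torsion-free class on `C`. -/
theorem preimage_torsionFree_of_giraud
    {D : Type u} [Category.{v} D] [Abelian D]
    {C : Type u} [Category.{v} C] [Abelian C]
    (l : D ⥤ C) (i : C ⥤ D) (adj : l ⊣ i)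
    [PreservesFiniteLimits l] [PreservesFiniteColimits l] [i.Full] [i.Faithful]
    (p : TorsionPair D) :
    IsTorsionFreeClass C (preimageSet i p.torsionFree) :=
  preimage_torsionFree_of_giraud_general l i adj p

end TiltedGiraudPaper
end

section
/- Let D be an abelian category with a distinguished Giraud subcategory (D, C, l, i). Then the assignments (T, F) ↦ (T̂, F̂) and (X, Y) ↦ (l(X), l(Y)) give a one-to-one correspondence between torsion pairs (X, Y) on D satisfying il(Y) ⊆ Y ⊆ S^⊥ and torsion pairs (T, F) on C. -/
/-!
A Giraud subcategory has three properties that do all the work: the counit `l i ⟶ 𝟭` is an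
isomorphism, every `i Z` lies in `S^⊥`, and for `X ∈ S^⊥` the unit `X ⟶ i l X` is a monomorphism
(its kernel is killed by the exact functor `l`, so lies in `S`). Hence a morphism into an object
of `S^⊥` vanishes as soon as its image under `l` does, and Hom-orthogonality transfers in both
directions. A torsion pair is already determined by `Hom(T, F) = 0` and the existence of torsion
sequences, as these force `T = ⊥F` and `F = T⊥`. The torsion sequence of `Z` in `C` is `l` applied
to that of `i Z`; the torsion sequence of `A` in `D` comes from factoring the adjoint `A ⟶ i F`
of the torsion-free quotient `l A ⟶ F` through its image.
-/

open CategoryTheory Limits CategoryTheory.Pretriangulated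

universe w'' w' w v'' u'' v' u' v u

namespace TiltedGiraudPaper

section TorsionPairs

variable {C : Type u} [Category.{v} C]

def IsClosedUnderIso (P : Set C) : Prop :=
  ∀ ⦃X Y : C⦄, (X ≅ Y) → X ∈ P → Y ∈ P

lemma ClosedUnderColimits.isClosedUnderIso {P : Set C} (hP : ClosedUnderColimits C P) :
    IsClosedUnderIso P := fun X _ e hX =>
  hP _ ((isColimitConstCocone (Discrete PUnit.{v + 1}) X).ofIsoColimit (Cocone.extendIso _ e))
    fun _ => hX

lemma ClosedUnderLimits.isClosedUnderIso {P : Set C} (hP : ClosedUnderLimits C P) :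
    IsClosedUnderIso P := fun X _ e hX =>
  hP _ ((isLimitConstCone (Discrete PUnit.{v + 1}) X).ofIsoLimit (Cone.extendIso _ e))
    fun _ => hX

lemma IsClosedUnderIso.inter {P Q : Set C} (hP : IsClosedUnderIso P) (hQ : IsClosedUnderIso Q) :
    IsClosedUnderIso (P ∩ Q) := fun _ _ e hX => ⟨hP e hX.1, hQ e hX.2⟩

lemma isClosedUnderIso_rightPerp [HasZeroMorphisms C] (P : Set C) :
    IsClosedUnderIso (rightPerp P) := fun _ _ e hX Z hZ f => by
  rw [← cancel_mono e.inv, hX Z hZ (f ≫ e.inv), zero_comp]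

lemma mem_rightPerp_of_mono [HasZeroMorphisms C] {P : Set C} {X Y : C} (m : X ⟶ Y) [Mono m]
    (hY : Y ∈ rightPerp P) : X ∈ rightPerp P := fun Z hZ f => by
  rw [← cancel_mono m, hY Z hZ (f ≫ m), zero_comp]

lemma closedUnderColimits_leftPerp [HasZeroMorphisms C] (P : Set C) :
    ClosedUnderColimits C (leftPerp P) := fun _ hc hX Y hY f =>
  hc.hom_ext fun j => by rw [comp_zero, hX j Y hY (_ ≫ f)]

lemma closedUnderLimits_rightPerp [HasZeroMorphisms C] (P : Set C) :
    ClosedUnderLimits C (rightPerp P) := fun _ hc hX Z hZ f =>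
  hc.hom_ext fun j => by rw [zero_comp, hX j Z hZ (f ≫ _)]

lemma TorsionPair.isClosedUnderIso_torsion [HasZeroMorphisms C] (p : TorsionPair C) :
    IsClosedUnderIso p.torsion :=
  ClosedUnderColimits.isClosedUnderIso p.isTorsionClass.1

lemma TorsionPair.isClosedUnderIso_torsionFree [HasZeroMorphisms C] (p : TorsionPair C) :
    IsClosedUnderIso p.torsionFree :=
  ClosedUnderLimits.isClosedUnderIso p.isTorsionFreeClass.1

variable [Abelian C]

lemma closedUnderExtensions_leftPerp (P : Set C) : ClosedUnderExtensions C (leftPerp P) := by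
  intro S hS h₁ h₃ Y hY f
  have := hS.epi_g
  obtain ⟨k, rfl⟩ := hS.exact.desc' f (h₁ Y hY _)
  rw [h₃ Y hY k, comp_zero]

lemma closedUnderExtensions_rightPerp (P : Set C) : ClosedUnderExtensions C (rightPerp P) := by
  intro S hS h₁ h₃ Z hZ f
  have := hS.mono_f
  obtain ⟨k, rfl⟩ := hS.exact.lift' f (h₃ Z hZ _)
  rw [h₁ Z hZ k, zero_comp]

section OfExistsShortExact

variable {T F : Set C} (hz : ∀ ⦃X Y : C⦄, X ∈ T → Y ∈ F → ∀ f : X ⟶ Y, f = 0)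
  (hses : ∀ A : C, ∃ (X Y : C) (f : X ⟶ A) (g : A ⟶ Y) (w : f ≫ g = 0),
    X ∈ T ∧ Y ∈ F ∧ (ShortComplex.mk f g w).ShortExact)
include hz hses

lemma eq_leftPerp_of_exists_shortExact (hT : IsClosedUnderIso T) : T = leftPerp F := by
  refine Set.Subset.antisymm (fun X hX Y hY => hz hX hY) fun A hA => ?_
  obtain ⟨X, Y, f, g, w, hX, hY, hS⟩ := hses A
  have := hS.epi_g
  have : IsIso f := hS.isIso_f_iff.2 (IsZero.of_epi_eq_zero g (hA Y hY g))
  exact hT (asIso f) hX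

lemma eq_rightPerp_of_exists_shortExact (hF : IsClosedUnderIso F) : F = rightPerp T := by
  refine Set.Subset.antisymm (fun Y hY X hX => hz hX hY) fun A hA => ?_
  obtain ⟨X, Y, f, g, w, hX, hY, hS⟩ := hses A
  have := hS.mono_f
  have : IsIso g := hS.isIso_g_iff.2 (IsZero.of_mono_eq_zero f (hA X hX f))
  exact hF (asIso g).symm hY

end OfExistsShortExact

noncomputable def TorsionPair.ofExistsShortExact (T F : Set C) (hT : IsClosedUnderIso T)
    (hF : IsClosedUnderIso F) (hz : ∀ ⦃X Y : C⦄, X ∈ T → Y ∈ F → ∀ f : X ⟶ Y, f = 0)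
    (hses : ∀ A : C, ∃ (X Y : C) (f : X ⟶ A) (g : A ⟶ Y) (w : f ≫ g = 0),
      X ∈ T ∧ Y ∈ F ∧ (ShortComplex.mk f g w).ShortExact) : TorsionPair C where
  torsion := T
  torsionFree := F
  isTorsionClass := by
    rw [eq_leftPerp_of_exists_shortExact hz hses hT]
    exact ⟨closedUnderColimits_leftPerp F, closedUnderExtensions_leftPerp F⟩
  isTorsionFreeClass := by
    rw [eq_rightPerp_of_exists_shortExact hz hses hF]
    exact ⟨closedUnderLimits_rightPerp T, closedUnderExtensions_rightPerp T⟩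
  hom_eq_zero := hz
  exists_ses := hses

namespace TorsionPair

variable (p : TorsionPair C)

lemma torsion_eq_leftPerp : p.torsion = leftPerp p.torsionFree :=
  eq_leftPerp_of_exists_shortExact p.hom_eq_zero p.exists_ses p.isClosedUnderIso_torsion

lemma torsionFree_eq_rightPerp : p.torsionFree = rightPerp p.torsion :=
  eq_rightPerp_of_exists_shortExact p.hom_eq_zero p.exists_ses p.isClosedUnderIso_torsionFree

lemma ext {p q : TorsionPair C} (h₁ : p.torsion = q.torsion)
    (h₂ : p.torsionFree = q.torsionFree) : p = q := by
  cases p; cases q; cases h₁; cases h₂; rfl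

end TorsionPair

lemma _root_.CategoryTheory.ShortComplex.ShortExact.nonempty_iso_X₁ {S S' : ShortComplex C}
    (hS : S.ShortExact) (hS' : S'.ShortExact) (e₂ : S.X₂ ≅ S'.X₂) (e₃ : S.X₃ ≅ S'.X₃)
    (comm : S.g ≫ e₃.hom = e₂.hom ≫ S'.g) : Nonempty (S.X₁ ≅ S'.X₁) := by
  have hker := KernelFork.isLimitOfIsLimitOfIff hS.fIsKernel S'.g e₂ fun _ φ => by
    rw [← Category.assoc, ← cancel_mono e₃.hom, Category.assoc, comm, zero_comp,
      Category.assoc]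
  exact ⟨IsLimit.conePointUniqueUpToIso hker hS'.fIsKernel⟩

end TorsionPairs

section Giraud

variable {D : Type u} [Category.{v} D] {C : Type u'} [Category.{v'} C]
  {l : D ⥤ C} {i : C ⥤ D} (adj : l ⊣ i)

lemma isClosedUnderIso_imageSet (P : Set D) : IsClosedUnderIso (imageSet l P) :=
  fun _ _ e ⟨X, hX, ⟨e'⟩⟩ => ⟨X, hX, ⟨e' ≪≫ e⟩⟩

lemma obj_mem_imageSet {P : Set D} {X : D} (hX : X ∈ P) : l.obj X ∈ imageSet l P :=
  ⟨X, hX, ⟨Iso.refl _⟩⟩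

lemma isClosedUnderIso_preimageSet {P : Set C} (hP : IsClosedUnderIso P) :
    IsClosedUnderIso (preimageSet l P) :=
  fun _ _ e hX => hP (l.mapIso e) hX

include adj

lemma imageSet_preimageSet [i.Full] [i.Faithful] {P : Set C} (hP : IsClosedUnderIso P) :
    imageSet l (preimageSet l P) = P :=
  Set.Subset.antisymm (fun _ ⟨_, hX, ⟨e⟩⟩ => hP e hX) fun Z hZ =>
    ⟨i.obj Z, hP (asIso (adj.counit.app Z)).symm hZ, ⟨asIso (adj.counit.app Z)⟩⟩

lemma eq_zero_of_unit_comp_map_eq_zero [Preadditive D] [Preadditive C] {X : D} {Z : C}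
    (f : l.obj X ⟶ Z) (hf : adj.unit.app X ≫ i.map f = 0) : f = 0 := by
  have := adj.isLeftAdjoint
  rw [← (adj.homEquiv X Z).symm_apply_apply f, adj.homEquiv_unit, hf,
    adj.homEquiv_counit, l.map_zero, zero_comp]

lemma obj_mem_rightPerp_kerSet [Preadditive D] [Preadditive C] (Z : C) :
    i.obj Z ∈ rightPerp (kerSet l) := fun X hX f => by
  have := adj.isRightAdjoint
  rw [← (adj.homEquiv X Z).apply_symm_apply f, hX.eq_of_src ((adj.homEquiv X Z).symm f) 0,
    adj.homEquiv_unit, i.map_zero, comp_zero]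

lemma isIso_map_unit_app [i.Full] [i.Faithful] (X : D) : IsIso (l.map (adj.unit.app X)) :=
  have : IsIso (l.map (adj.unit.app X) ≫ adj.counit.app (l.obj X)) := by
    rw [adj.left_triangle_components X]
    exact IsIso.id _
  IsIso.of_isIso_comp_right _ (adj.counit.app (l.obj X))

lemma imageSet_preimageSet_inter_rightPerp [Preadditive D] [Preadditive C] [i.Full] [i.Faithful]
    {P : Set C} (hP : IsClosedUnderIso P) :
    imageSet l (preimageSet l P ∩ rightPerp (kerSet l)) = P :=
  Set.Subset.antisymm (fun _ ⟨_, ⟨hX, _⟩, ⟨e⟩⟩ => hP e hX) fun Z hZ =>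
    ⟨i.obj Z, ⟨hP (asIso (adj.counit.app Z)).symm hZ, obj_mem_rightPerp_kerSet adj Z⟩,
      ⟨asIso (adj.counit.app Z)⟩⟩

lemma TorsionPair.map_hom_eq_zero [Preadditive D] [Preadditive C] (q : TorsionPair D)
    (hq : ∀ Y ∈ q.torsionFree, i.obj (l.obj Y) ∈ q.torsionFree) ⦃X' Y' : C⦄
    (hX' : X' ∈ imageSet l q.torsion) (hY' : Y' ∈ imageSet l q.torsionFree) (f : X' ⟶ Y') :
    f = 0 := by
  obtain ⟨X, hX, ⟨eX⟩⟩ := hX'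
  obtain ⟨Y, hY, ⟨eY⟩⟩ := hY'
  have hiY' : i.obj Y' ∈ q.torsionFree := q.isClosedUnderIso_torsionFree (i.mapIso eY) (hq Y hY)
  rw [← cancel_epi eX.hom, comp_zero]
  exact eq_zero_of_unit_comp_map_eq_zero adj _ (q.hom_eq_zero hX hiY' _)

variable [Abelian D] [Abelian C] [PreservesFiniteLimits l] [i.Full] [i.Faithful]

lemma mono_unit_app_of_mem_rightPerp {X : D} (hX : X ∈ rightPerp (kerSet l)) :
    Mono (adj.unit.app X) := by
  have := isIso_map_unit_app adj X
  have hker : kernel (adj.unit.app X) ∈ kerSet l :=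
    KernelFork.IsLimit.isZero_of_mono (KernelFork.mapIsLimit _ (kernelIsKernel _) l)
  exact Preadditive.mono_of_cancel_zero _ fun g hg => by
    rw [← kernel.lift_ι _ g hg, hX _ hker (kernel.ι _), comp_zero]

lemma eq_zero_of_map_eq_zero {X Y : D} (hY : Y ∈ rightPerp (kerSet l)) (f : X ⟶ Y)
    (hf : l.map f = 0) : f = 0 := by
  have := mono_unit_app_of_mem_rightPerp adj hY
  rw [← cancel_mono (adj.unit.app Y), zero_comp]
  simpa [hf] using adj.unit.naturality f

namespace TorsionPair

lemma comap_hom_eq_zero (p : TorsionPair C) ⦃X Y : D⦄ (hX : X ∈ preimageSet l p.torsion)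
    (hY : Y ∈ preimageSet l p.torsionFree ∩ rightPerp (kerSet l)) (f : X ⟶ Y) : f = 0 :=
  eq_zero_of_map_eq_zero adj hY.2 f (p.hom_eq_zero hX hY.1 _)

section Preimage

variable (q : TorsionPair D) (hq : ∀ Y ∈ q.torsionFree, i.obj (l.obj Y) ∈ q.torsionFree)
  (hqS : q.torsionFree ⊆ rightPerp (kerSet l))
include hq hqS

lemma preimageSet_imageSet_torsion : preimageSet l (imageSet l q.torsion) = q.torsion := by
  refine Set.Subset.antisymm (fun A hA => ?_) fun A hA => obj_mem_imageSet hA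
  rw [q.torsion_eq_leftPerp]
  exact fun F hF f => eq_zero_of_map_eq_zero adj (hqS hF) f
    (map_hom_eq_zero adj q hq hA (obj_mem_imageSet hF) _)

lemma preimageSet_imageSet_torsionFree_inter_rightPerp :
    preimageSet l (imageSet l q.torsionFree) ∩ rightPerp (kerSet l) = q.torsionFree := by
  refine Set.Subset.antisymm (fun A ⟨⟨Y, hY, ⟨e⟩⟩, hA⟩ => ?_) fun A hA =>
    ⟨obj_mem_imageSet hA, hqS hA⟩
  have := mono_unit_app_of_mem_rightPerp adj hA
  have hilA : i.obj (l.obj A) ∈ q.torsionFree :=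
    q.isClosedUnderIso_torsionFree (i.mapIso e) (hq Y hY)
  rw [q.torsionFree_eq_rightPerp]
  exact fun X hX f => zero_of_comp_mono (adj.unit.app A) (q.hom_eq_zero hX hilA _)

end Preimage

variable [PreservesFiniteColimits l]

lemma exists_shortExact_comap (p : TorsionPair C) (A : D) :
    ∃ (X Y : D) (f : X ⟶ A) (g : A ⟶ Y) (w : f ≫ g = 0),
      X ∈ preimageSet l p.torsion ∧ Y ∈ preimageSet l p.torsionFree ∩ rightPerp (kerSet l) ∧
      (ShortComplex.mk f g w).ShortExact := by
  obtain ⟨T, F, a, b, w, hT, hF, hab⟩ := p.exists_ses (l.obj A)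
  have := hab.epi_g
  let φ : A ⟶ i.obj F := adj.unit.app A ≫ i.map b
  let g := Abelian.factorThruImage φ
  have hS : (ShortComplex.mk _ _ (kernel.condition g)).ShortExact :=
    .mk' (ShortComplex.exact_of_f_is_kernel _ (kernelIsKernel g)) inferInstance inferInstance
  let u : l.obj (Abelian.image φ) ⟶ F := l.map (Abelian.image.ι φ) ≫ adj.counit.app F
  have hu : l.map g ≫ u = b := by
    rw [← Functor.map_comp_assoc, Abelian.image.fac]
    simp [φ]
  have : Epi u := epi_of_epi_fac hu
  have := isIso_of_mono_of_epi u
  let e₃ : l.obj (Abelian.image φ) ≅ F := asIso u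
  obtain ⟨e₁⟩ := (hS.map_of_exact l).nonempty_iso_X₁ hab (Iso.refl _) e₃
    (hu.trans (Category.id_comp b).symm)
  exact ⟨_, _, _, _, _, p.isClosedUnderIso_torsion e₁.symm hT,
    ⟨p.isClosedUnderIso_torsionFree e₃.symm hF,
      mem_rightPerp_of_mono (Abelian.image.ι φ) (obj_mem_rightPerp_kerSet adj F)⟩, hS⟩

/-- The torsion pair `(T̂, F̂)` on `D`. -/
noncomputable def comap (p : TorsionPair C) : TorsionPair D :=
  ofExistsShortExact (preimageSet l p.torsion)
    (preimageSet l p.torsionFree ∩ rightPerp (kerSet l))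
    (isClosedUnderIso_preimageSet p.isClosedUnderIso_torsion)
    ((isClosedUnderIso_preimageSet p.isClosedUnderIso_torsionFree).inter
      (isClosedUnderIso_rightPerp _))
    (comap_hom_eq_zero adj p) (exists_shortExact_comap adj p)

lemma obj_map_mem_comap_torsionFree (p : TorsionPair C) {Y : D}
    (hY : Y ∈ (p.comap adj).torsionFree) : i.obj (l.obj Y) ∈ (p.comap adj).torsionFree :=
  ⟨p.isClosedUnderIso_torsionFree (asIso (adj.counit.app (l.obj Y))).symm hY.1,
    obj_mem_rightPerp_kerSet adj _⟩

lemma exists_shortExact_map (q : TorsionPair D) (Z : C) :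
    ∃ (X Y : C) (f : X ⟶ Z) (g : Z ⟶ Y) (w : f ≫ g = 0),
      X ∈ imageSet l q.torsion ∧ Y ∈ imageSet l q.torsionFree ∧
      (ShortComplex.mk f g w).ShortExact := by
  obtain ⟨X, Y, f, g, w, hX, hY, hS⟩ := q.exists_ses (i.obj Z)
  let e : l.obj (i.obj Z) ≅ Z := asIso (adj.counit.app Z)
  exact ⟨_, _, l.map f ≫ e.hom, e.inv ≫ l.map g,
    by rw [Category.assoc, e.hom_inv_id_assoc, ← l.map_comp, w, l.map_zero],
    obj_mem_imageSet hX, obj_mem_imageSet hY,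
    ShortComplex.shortExact_of_iso (S₁ := (ShortComplex.mk f g w).map l)
      (ShortComplex.isoMk (Iso.refl _) e (Iso.refl _) (Category.id_comp _)
        (by exact (e.hom_inv_id_assoc _).trans (Category.comp_id _).symm))
      (hS.map_of_exact l)⟩

/-- The torsion pair `(l(X), l(Y))` on `C`. -/
noncomputable def map (q : TorsionPair D)
    (hq : ∀ Y ∈ q.torsionFree, i.obj (l.obj Y) ∈ q.torsionFree) : TorsionPair C :=
  ofExistsShortExact (imageSet l q.torsion) (imageSet l q.torsionFree)
    (isClosedUnderIso_imageSet _) (isClosedUnderIso_imageSet _) (map_hom_eq_zero adj q hq)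
    (exists_shortExact_map adj q)

noncomputable def giraudEquiv :
    {q : TorsionPair D // (∀ Y ∈ q.torsionFree, i.obj (l.obj Y) ∈ q.torsionFree) ∧
      q.torsionFree ⊆ rightPerp (kerSet l)} ≃ TorsionPair C where
  toFun q := q.1.map adj q.2.1
  invFun p := ⟨p.comap adj, fun _ => p.obj_map_mem_comap_torsionFree adj, fun _ hY => hY.2⟩
  left_inv := fun ⟨q, hq, hqS⟩ => Subtype.ext <| TorsionPair.ext
    (q.preimageSet_imageSet_torsion adj hq hqS)
    (q.preimageSet_imageSet_torsionFree_inter_rightPerp adj hq hqS)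
  right_inv p := TorsionPair.ext (imageSet_preimageSet adj p.isClosedUnderIso_torsion)
    (imageSet_preimageSet_inter_rightPerp adj p.isClosedUnderIso_torsionFree)

end TorsionPair

end Giraud

/-- **Theorem.** Let `(D, C, l, i)` be a distinguished Giraud subcategory.  There is a
one-to-one correspondence between torsion pairs `(X, Y)` on `D` with `il(Y) ⊆ Y ⊆ S^⊥`
(where `S = Ker l`) and torsion pairs `(T, F)` on `C`, given by `(X, Y) ↦ (l(X), l(Y))`
and `(T, F) ↦ (T̂, F̂)`. -/
theorem giraud_torsionPair_correspondence
    {D : Type u} [Category.{v} D] [Abelian D]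
    {C : Type u} [Category.{v} C] [Abelian C]
    (l : D ⥤ C) (i : C ⥤ D) (adj : l ⊣ i)
    [PreservesFiniteLimits l] [PreservesFiniteColimits l] [i.Full] [i.Faithful] :
    ∃ e : {q : TorsionPair D //
        (∀ Y ∈ q.torsionFree, i.obj (l.obj Y) ∈ q.torsionFree) ∧
        q.torsionFree ⊆ rightPerp (kerSet l)} ≃ TorsionPair C,
      (∀ q, (e q).torsion = imageSet l q.1.torsion ∧
            (e q).torsionFree = imageSet l q.1.torsionFree) ∧
      (∀ p, (e.symm p).1.torsion = preimageSet l p.torsion ∧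
            (e.symm p).1.torsionFree =
              preimageSet l p.torsionFree ∩ rightPerp (kerSet l)) :=
  ⟨TorsionPair.giraudEquiv adj, fun _ => ⟨rfl, rfl⟩, fun _ => ⟨rfl, rfl⟩⟩

end TiltedGiraudPaper
end
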